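/- arXiv:1111.3020 — 3 statements merged into one kernel-verified Lean document; each statement's English description precedes it below -/
import Mathlib

section
/- Let (R, m) be a Noetherian local domain with Krull dimension at least 2. Then for any element f ∈ R, the localization R[f⁻¹] is not a field. -/
/-!
If `R[f⁻¹]` is a field, every nonzero prime of `R` contains `f`. Suppose some prime `P` had
height `≥ 2`. By Krull's principal ideal theorem the minimal primes of `(f)` have height `≤ 1`,
so prime avoidance gives `x ∈ P` outside all of them. A minimal prime `q` over `(x)` is nonzero,
hence contains `f` and thus a minimal prime `p` of `(f)`; then `0 < p < q`, so `q` has height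
`≥ 2`, contradicting the principal ideal theorem for `(x)`.
-/

namespace Ideal

variable {R : Type*} [CommRing R] [IsNoetherianRing R]

theorem exists_mem_forall_notMem_minimalPrimes_span_singleton {P : Ideal R}
    (hP : 2 ≤ P.height) (f : R) : ∃ x ∈ P, ∀ p ∈ (span {f}).minimalPrimes, x ∉ p := by
  have hP_not_le : ∀ p ∈ (span {f}).minimalPrimes, ¬ P ≤ p := fun p hp hPp ↦ by
    have := hP.trans <| (height_mono hPp).trans <|
      height_le_one_of_isPrincipal_of_mem_minimalPrimes _ p hp
    norm_num at this
  by_contra! hcover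
  obtain ⟨p, hp, hPp⟩ := (subset_union_prime_finite (finite_minimalPrimes_of_isNoetherianRing R _)
    ⊥ ⊥ fun p hp _ _ ↦ hp.isPrime).mp fun x hx ↦ by
      obtain ⟨p, hp, hxp⟩ := hcover x hx
      exact Set.mem_biUnion hp hxp
  exact hP_not_le p hp hPp

theorem height_le_one_of_forall_ne_bot_mem [IsDomain R] {f : R} (hf : f ≠ 0)
    (hmem : ∀ q : Ideal R, q.IsPrime → q ≠ ⊥ → f ∈ q) (P : Ideal R) [P.IsPrime] :
    P.height ≤ 1 := by
  by_contra! hP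
  have hP2 : 2 ≤ P.height := Order.add_one_le_of_lt hP
  obtain ⟨x, hxP, hx⟩ := exists_mem_forall_notMem_minimalPrimes_span_singleton hP2 f
  have hfP : f ∈ P := hmem P ‹_› fun h ↦ by simp [h, height_bot] at hP
  obtain ⟨p₀, hp₀, -⟩ := exists_minimalPrimes_le (span_singleton_le_iff_mem P |>.mpr hfP)
  have hx0 : x ≠ 0 := fun h ↦ hx p₀ hp₀ (h ▸ p₀.zero_mem)
  obtain ⟨q, hq, -⟩ := exists_minimalPrimes_le (span_singleton_le_iff_mem P |>.mpr hxP)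
  have := hq.isPrime
  have hxq : x ∈ q := hq.1.2 (mem_span_singleton_self x)
  have hfq : f ∈ q := hmem q hq.isPrime fun h ↦ hx0 (by simpa [h] using hxq)
  obtain ⟨p, hp, hpq⟩ := exists_minimalPrimes_le (span_singleton_le_iff_mem q |>.mpr hfq)
  have := hp.isPrime
  have hpq : p < q := lt_of_le_of_ne hpq fun h ↦ hx p hp (h ▸ hxq)
  have hp1 : 1 ≤ p.height := Order.one_le_iff_ne_zero.mpr <| height_eq_zero_iff_eq_bot.not.mpr
    fun h ↦ hf (by simpa [h] using hp.1.2 (mem_span_singleton_self f))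
  have hq2 : 1 + 1 ≤ q.height :=
    (by gcongr : 1 + 1 ≤ p.height + 1).trans (height_add_one_le_of_lt_of_isPrime hpq)
  have := hq2.trans (height_le_one_of_isPrincipal_of_mem_minimalPrimes _ q hq)
  norm_num at this

end Ideal

theorem ne_zero_of_isField_localization_away {R : Type*} [CommRing R] {f : R}
    (h : IsField (Localization.Away f)) : f ≠ 0 := by
  rintro rfl
  have := IsLocalization.subsingleton (M := Submonoid.powers (0 : R))
    (S := Localization.Away (0 : R)) (Submonoid.mem_powers 0)
  obtain ⟨a, b, hab⟩ := h.exists_pair_ne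
  exact hab (Subsingleton.elim a b)

theorem mem_of_isField_localization_away {R : Type*} [CommRing R] [IsDomain R] {f : R}
    (h : IsField (Localization.Away f)) {q : Ideal R} [q.IsPrime] (hq : q ≠ ⊥) : f ∈ q := by
  by_contra hfq
  let _ : Field (Localization.Away f) := h.toField
  have hdisj := (Ideal.disjoint_powers_iff_notMem_of_isPrime f).mpr hfq
  have := IsLocalization.isPrime_of_isPrime_disjoint _ (Localization.Away f) q ‹_› hdisj
  have hinj := IsLocalization.injective (Localization.Away f)
    (powers_le_nonZeroDivisors_of_noZeroDivisors (ne_zero_of_isField_localization_away h))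
  apply hq
  rw [← IsLocalization.under_map_of_isPrime_disjoint _ (Localization.Away f) ‹_› hdisj,
    Ideal.eq_bot_of_prime (q.map _), Ideal.under_def, Ideal.comap_bot_of_injective _ hinj]

theorem ringKrullDim_le_one_of_isField_localization_away {R : Type*} [CommRing R] [IsDomain R]
    [IsNoetherianRing R] {f : R} (h : IsField (Localization.Away f)) : ringKrullDim R ≤ 1 :=
  (ringKrullDim_le_iff_height_le 1).mpr fun P _ ↦ by
    exact_mod_cast Ideal.height_le_one_of_forall_ne_bot_mem
      (ne_zero_of_isField_localization_away h) (fun _ _ hq ↦ mem_of_isField_localization_away h hq) P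

theorem localization_away_not_isField_of_two_le_krullDim_general
    (R : Type*) [CommRing R] [IsDomain R] [IsNoetherianRing R]
    (hdim : 2 ≤ ringKrullDim R) (f : R) :
    ¬ IsField (Localization.Away f) := fun h ↦ by
  have := hdim.trans (ringKrullDim_le_one_of_isField_localization_away h)
  norm_num at this

/-- Let `(R, m)` be a Noetherian local domain of Krull dimension at least `2`.
Then for any `f ∈ R`, the localization `R[f⁻¹]` is not a field. -/
theorem localization_away_not_isField_of_two_le_krullDim
    (R : Type*) [CommRing R] [IsDomain R] [IsNoetherianRing R] [IsLocalRing R]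
    (hdim : 2 ≤ ringKrullDim R) (f : R) :
    ¬ IsField (Localization.Away f) :=
  localization_away_not_isField_of_two_le_krullDim_general R hdim f
end

section
/- Let f : M → N be a homomorphism of modules over a Noetherian ring R such that the cokernel N/f(M) is finitely generated (and M, N arbitrary). If f is pure (remains injective after tensoring with every R-module), then f splits, and conversely every split injection is pure. -/
/-!
Over a Noetherian ring the cokernel `C` of `f` is finitely presented, say
`R^k → R^n → C → 0`. Lifting `R^n → C` to `q : R^n → N` turns the relations of `C` into a
finite linear system with constants in `f(M)` that is solvable in `N`. Tensoring with the
cokernel of the transposed system shows that purity makes such a system solvable in `M`, and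
correcting `q` by a solution in `M` gives a section of `N → C`, hence a retraction of `f`.
-/

universe u v w

open TensorProduct

def LinearMap.IsPure {R : Type u} [CommRing R] {M : Type v} {N : Type w}
    [AddCommGroup M] [AddCommGroup N] [Module R M] [Module R N] (f : M →ₗ[R] N) : Prop :=
  ∀ (K : Type u) [AddCommGroup K] [Module R K], Function.Injective (LinearMap.rTensor K f)

namespace LinearMap.IsPure

variable {R : Type u} [CommRing R] {M : Type v} {N : Type w} [AddCommGroup M] [AddCommGroup N]
  [Module R M] [Module R N] {f : M →ₗ[R] N}

theorem of_comp_eq_id {g : N →ₗ[R] M} (hgf : g ∘ₗ f = LinearMap.id) : f.IsPure := by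
  intro K _ _
  refine Function.LeftInverse.injective (g := LinearMap.rTensor K g) fun x => ?_
  rw [← LinearMap.comp_apply, ← LinearMap.rTensor_comp, hgf, LinearMap.rTensor_id,
    LinearMap.id_apply]

theorem injective (hf : f.IsPure) : Function.Injective f := by
  have f_eq : ⇑f = TensorProduct.rid R N ∘ f.rTensor R ∘ (TensorProduct.rid R M).symm := by
    ext x; simp
  rw [f_eq]
  exact (TensorProduct.rid R N).injective.comp ((hf R).comp (TensorProduct.rid R M).symm.injective)

theorem lTensor_injective (hf : f.IsPure) (K : Type u) [AddCommGroup K] [Module R K] :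
    Function.Injective (f.lTensor K) :=
  (f.lTensor_inj_iff_rTensor_inj K).2 (hf K)

theorem exists_sum_smul_eq (hf : f.IsPure) {k n : ℕ} (a : Fin k → Fin n → R) (m : Fin k → M)
    (x : Fin n → N) (hx : ∀ i, ∑ j, a i j • x j = f (m i)) :
    ∃ y : Fin n → M, ∀ i, ∑ j, a i j • y j = m i := by
  -- the generators `e i` of `R^k ⧸ (columns of a)` satisfy the transposed relations
  let A := (Matrix.of a).mulVecLin
  let e : Fin k → (Fin k → R) ⧸ LinearMap.range A := fun i => Submodule.mkQ _ (Pi.single i 1)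
  have sum_smul_e (c : Fin k → R) : ∑ i, c i • e i = Submodule.mkQ _ c := by
    simp only [e, ← map_smul, ← map_sum, ← pi_eq_sum_univ' c]
  have e_span : Submodule.span R (Set.range e) = ⊤ := by
    refine eq_top_iff.2 fun c _ => ?_
    obtain ⟨c, rfl⟩ := Submodule.mkQ_surjective _ c
    rw [← sum_smul_e]
    exact Submodule.sum_mem _ fun i _ => Submodule.smul_mem _ _ (Submodule.subset_span ⟨i, rfl⟩)
  have image_zero : ∑ i, e i ⊗ₜ[R] f (m i) = 0 := by
    refine sum_tmul_eq_zero_of_vanishesTrivially R ⟨n, a, x, fun i => (hx i).symm, fun j => ?_⟩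
    rw [sum_smul_e, Submodule.mkQ_apply, Submodule.Quotient.mk_eq_zero]
    exact ⟨Pi.single j 1, by ext i; simp [A]⟩
  have tensor_zero : ∑ i, e i ⊗ₜ[R] m i = 0 :=
    hf.lTensor_injective _ (by simpa only [map_sum, LinearMap.lTensor_tmul, map_zero])
  obtain ⟨l, b, z, hz, hb⟩ := vanishesTrivially_of_sum_tmul_eq_zero R e_span tensor_zero
  have hb_range : ∀ s, ∃ d : Fin n → R, ∀ i, b i s = ∑ j, a i j * d j := by
    intro s
    specialize hb s
    rw [sum_smul_e, Submodule.mkQ_apply, Submodule.Quotient.mk_eq_zero] at hb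
    obtain ⟨d, hd⟩ := hb
    exact ⟨d, fun i => (congrFun hd i).symm⟩
  choose d hd using hb_range
  refine ⟨fun j => ∑ s, d s j • z s, fun i => ?_⟩
  simp only [hz i, hd, Finset.smul_sum, Finset.sum_smul, smul_smul]
  exact Finset.sum_comm

theorem exists_rightInverse_of_exact {C : Type*} [AddCommGroup C] [Module R C]
    [Module.FinitePresentation R C] (hf : f.IsPure) {π : N →ₗ[R] C} (hfπ : Function.Exact f π)
    (hπ : Function.Surjective π) : ∃ σ : C →ₗ[R] N, π ∘ₗ σ = LinearMap.id := by
  obtain ⟨n, k, p, r, hp, hrp⟩ := Module.FinitePresentation.exists_fin' R C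
  obtain ⟨q, hq⟩ := Module.projective_lifting_property π p hπ
  have relations_mem_range : ∀ i, ∃ m, f m = q (r (Pi.single i 1)) := fun i =>
    (hfπ _).1 (by rw [← LinearMap.comp_apply π, hq, ← LinearMap.comp_apply,
      hrp.linearMap_comp_eq_zero, LinearMap.zero_apply])
  choose m hm using relations_mem_range
  have q_apply (v : Fin n → R) : q v = ∑ j, v j • q (Pi.single j 1) := by
    conv_lhs => rw [pi_eq_sum_univ' v]
    simp only [map_sum, map_smul]
  obtain ⟨y, hy⟩ := hf.exists_sum_smul_eq (fun i j => r (Pi.single i 1) j) m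
    (fun j => q (Pi.single j 1)) fun i => by rw [hm, q_apply]
  let w := q - f ∘ₗ Fintype.linearCombination R y
  have hw : LinearMap.range r ≤ LinearMap.ker w := by
    rw [LinearMap.range_le_ker_iff]
    ext i
    simp [w, Fintype.linearCombination_apply, hy, hm]
  refine ⟨(LinearMap.range r).liftQ w hw ∘ₗ (hrp.linearEquivOfSurjective hp).symm.toLinearMap, ?_⟩
  refine (LinearMap.cancel_right hp).1 ?_
  ext j
  simp only [LinearMap.comp_apply, LinearEquiv.coe_coe, hrp.linearEquivOfSurjective_symm_apply,
    Submodule.liftQ_apply, w, LinearMap.sub_apply, map_sub, hfπ.apply_apply_eq_zero, sub_zero]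
  rw [← hq, LinearMap.comp_apply, LinearMap.id_apply]

end LinearMap.IsPure

/-- Over a Noetherian ring `R`, a module map `f : M → N` with finitely
generated cokernel splits as soon as it is pure; conversely every split injection is pure. -/
theorem isPure_iff_splits_of_finite_cokernel {R : Type u} [CommRing R] [IsNoetherianRing R]
    {M : Type u} {N : Type u} [AddCommGroup M] [AddCommGroup N] [Module R M] [Module R N]
    (f : M →ₗ[R] N) (hcoker : Module.Finite R (N ⧸ LinearMap.range f)) :
    (f.IsPure → ∃ g : N →ₗ[R] M, g.comp f = LinearMap.id) ∧
    (∀ g : N →ₗ[R] M, g.comp f = LinearMap.id → f.IsPure) := by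
  refine ⟨fun hf => ?_, fun _ => LinearMap.IsPure.of_comp_eq_id⟩
  have := Module.finitePresentation_of_finite R (N ⧸ LinearMap.range f)
  have hexact := LinearMap.exact_map_mkQ_range f
  have hmkQ := Submodule.mkQ_surjective (LinearMap.range f)
  exact ((hexact.split_tfae hf.injective hmkQ).out 0 1).1
    (hf.exists_rightInverse_of_exact hexact hmkQ)
end

section
/- Let R be an F-finite reduced Noetherian ring of characteristic p > 0 and c ∈ R an element not in any minimal prime such that the localization R_c is strongly F-regular. Then R is strongly F-regular if and only if the R-module map R → R^{1/q}, 1 ↦ c^{1/q}, splits for some power q = p^e. -/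
universe u

/-- `R` is *strongly F-regular* (in characteristic `p`): for every `c` not in any minimal
prime, the `R`-module map `R → R^{1/q}`, `1 ↦ c^{1/q}`, splits for some `q = pᵉ`.
Identifying `R^{1/q}` with `R` via the `q`-th power map, a splitting is an additive map
`ψ : R → R` with `ψ(r^q · x) = r · ψ(x)` and `ψ(c) = 1`. -/
def StronglyFRegular (p : ℕ) (R : Type u) [CommRing R] : Prop :=
  ∀ c : R, (∀ P ∈ minimalPrimes R, c ∉ P) →
    ∃ (e : ℕ) (ψ : R →+ R), 0 < e ∧
      (∀ r x : R, ψ (r ^ p ^ e * x) = r * ψ x) ∧ ψ c = 1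

/-!
Given `c'` outside the minimal primes, strong `F`-regularity of `R_c` yields a `pᵉ`-linear map
`ψ : R_c → R_c` with `ψ(c') = 1`. Since `R` is reduced, `c` is a nonzerodivisor and `R ⊆ R_c`;
since `R` is `F`-finite, `ψ(R)` lies in a finitely generated `R`-submodule of `R_c`, so for some
`N` the map `c^N ψ` restricts to a `pᵉ`-linear `θ : R → R` with `θ(c') = c^N`. Iterating the
splitting at `c` gives one at `c^N`, and composing it with `θ` splits `R` at `c'`.
-/

theorem RingHom.Finite.pow {A : Type*} [CommRing A] {f : A →+* A} (hf : f.Finite) (n : ℕ) :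
    (f ^ n).Finite := by
  induction n with
  | zero => exact RingHom.Finite.id A
  | succ n ih => rw [pow_succ]; exact ih.comp hf

theorem RingHom.Finite.exists_fin_sum_mul_eq {A B : Type*} [CommRing A] [CommRing B]
    {f : A →+* B} (hf : f.Finite) :
    ∃ (n : ℕ) (v : Fin n → B), ∀ x, ∃ a : Fin n → A, ∑ i, f (a i) * v i = x := by
  algebraize [f]
  obtain ⟨n, v, hv⟩ := Module.Finite.exists_fin (R := A) (M := B)
  refine ⟨n, v, fun x => ?_⟩
  exact (Submodule.mem_span_range_iff_exists_fun A).1 (hv ▸ Submodule.mem_top)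

theorem mem_nonZeroDivisors_of_forall_notMem_minimalPrimes {R : Type*} [CommRing R]
    [IsReduced R] {c : R} (hc : ∀ P ∈ minimalPrimes R, c ∉ P) : c ∈ nonZeroDivisors R := by
  refine mem_nonZeroDivisors_iff_right.2 fun y hy => ?_
  by_contra hy0
  have hy0 : y ∉ sInf (minimalPrimes R) := by
    rwa [minimalPrimes, Ideal.sInf_minimalPrimes, Ideal.radical_bot_of_isReduced]
  obtain ⟨P, hP, hyP⟩ : ∃ P ∈ minimalPrimes R, y ∉ P := by
    simpa only [Ideal.mem_sInf, not_forall, exists_prop] using hy0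
  exact hc P hP ((hP.isPrime.mem_or_mem (show y * c ∈ P from hy ▸ P.zero_mem)).resolve_left hyP)

theorem IsLocalization.algebraMap_notMem_minimalPrimes {R S : Type*} [CommRing R] [CommRing S]
    [Algebra R S] (M : Submonoid R) [IsLocalization M S] {x : R}
    (hx : ∀ P ∈ minimalPrimes R, x ∉ P) : ∀ Q ∈ minimalPrimes S, algebraMap R S x ∉ Q := by
  intro Q hQ hxQ
  have hmin := IsLocalization.minimalPrimes_map M S (⊥ : Ideal R)
  rw [Ideal.map_bot] at hmin
  exact hx _ (show Q ∈ Ideal.under R ⁻¹' minimalPrimes R from hmin ▸ hQ) hxQ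

theorem exists_addMonoidHom_lift_of_isInteger {R S M : Type*} [CommRing R] [CommRing S]
    [Algebra R S] [AddCommMonoid M] (hinj : Function.Injective (algebraMap R S)) (η : M →+ S)
    (hη : ∀ x, IsLocalization.IsInteger R (η x)) :
    ∃ θ : M →+ R, ∀ x, algebraMap R S (θ x) = η x := by
  choose θ hθ using hη
  exact ⟨AddMonoidHom.mk' θ fun x y => hinj (by simp only [map_add, hθ]), hθ⟩

namespace IsLocalization

variable {R S : Type*} [CommRing R] [CommRing S] [Algebra R S] (M : Submonoid R)
  [IsLocalization M S]

theorem exists_smul_isInteger_of_semilinear {g : R →+* R} (hg : g.Finite) (η : R →+ S)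
    (hη : ∀ r x, η (g r * x) = algebraMap R S r * η x) :
    ∃ m : M, ∀ x, IsInteger R ((m : R) • η x) := by
  obtain ⟨n, v, hv⟩ := hg.exists_fin_sum_mul_eq
  obtain ⟨m, hm⟩ := exist_integer_multiples_of_finite M (η ∘ v)
  refine ⟨m, fun x => ?_⟩
  obtain ⟨a, rfl⟩ := hv x
  simp only [map_sum, hη, Finset.smul_sum]
  refine Subsemiring.sum_mem _ fun i _ => ?_
  rw [← mul_smul_comm]
  exact isInteger_mul ⟨a i, rfl⟩ (hm i)

theorem exists_pow_semilinear_lift (hM : M ≤ nonZeroDivisors R) {q : ℕ} {g : R →+* R}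
    (hg : g.Finite) (hgq : ∀ r, g r = r ^ q) (ψ : S →+ S) (hψ : ∀ s y, ψ (s ^ q * y) = s * ψ y) :
    ∃ (m : M) (θ : R →+ R), (∀ r x, θ (r ^ q * x) = r * θ x) ∧
      ∀ x, algebraMap R S (θ x) = (m : R) • ψ (algebraMap R S x) := by
  let η : R →+ S := ψ.comp (algebraMap R S).toAddMonoidHom
  have hη : ∀ r x, η (g r * x) = algebraMap R S r * η x := fun r x => by
    simp only [η, AddMonoidHom.comp_apply, RingHom.toAddMonoidHom_eq_coe, AddMonoidHom.coe_coe,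
      hgq, map_mul, map_pow, hψ]
  obtain ⟨m, hm⟩ := exists_smul_isInteger_of_semilinear M hg η hη
  obtain ⟨θ, hθ⟩ :=
    exists_addMonoidHom_lift_of_isInteger (IsLocalization.injective S hM) ((m : R) • η) hm
  refine ⟨m, θ, fun r x => IsLocalization.injective S hM ?_, hθ⟩
  simp only [hθ, map_mul, AddMonoidHom.smul_apply]
  rw [← hgq, hη, mul_smul_comm]

end IsLocalization

section FSplitting

variable {R : Type*} [CommRing R]

def FSplitsAt (p : ℕ) (c : R) : Prop :=
  ∃ (e : ℕ) (ψ : R →+ R), 0 < e ∧ (∀ r x : R, ψ (r ^ p ^ e * x) = r * ψ x) ∧ ψ c = 1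

variable {p : ℕ}

theorem FSplitsAt.of_map {θ : R →+ R} {e : ℕ} (hθ : ∀ r x, θ (r ^ p ^ e * x) = r * θ x) {a : R}
    (h : FSplitsAt p (θ a)) : FSplitsAt p a := by
  obtain ⟨E, φ, hE, hφ, hφa⟩ := h
  refine ⟨E + e, φ.comp θ, by omega, fun r x => ?_, hφa⟩
  rw [AddMonoidHom.comp_apply, pow_add, pow_mul, hθ, hφ, AddMonoidHom.comp_apply]

theorem FSplitsAt.of_dvd {a b : R} (h : FSplitsAt p b) (hab : a ∣ b) : FSplitsAt p a := by
  obtain ⟨k, rfl⟩ := hab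
  refine FSplitsAt.of_map (θ := AddMonoidHom.mulRight k) (e := 0) (fun r x => ?_) h
  simp only [AddMonoidHom.coe_mulRight, pow_zero, pow_one, mul_assoc]

theorem FSplitsAt.pow (hp : 0 < p) {c : R} (h : FSplitsAt p c) : ∀ n, FSplitsAt p (c ^ n)
  | 0 => by simpa only [pow_zero] using h.of_dvd (one_dvd c)
  | n + 1 => by
    obtain ⟨E, φ, -, hφ, hφc⟩ := h.pow hp n
    have hsplit : FSplitsAt p (c ^ p ^ E * c ^ n) :=
      FSplitsAt.of_map hφ (by rwa [hφ, hφc, mul_one])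
    refine hsplit.of_dvd ?_
    rw [pow_succ']
    exact mul_dvd_mul_right (dvd_pow_self c (pow_ne_zero _ hp.ne')) _

end FSplitting

theorem stronglyFRegular_iff_splitting_at_c_general
    (p : ℕ) (R : Type u) [CommRing R] [ExpChar R p]
    (hred : IsReduced R) (hFfinite : (frobenius R p).Finite)
    (c : R) (hc : ∀ P ∈ minimalPrimes R, c ∉ P)
    (hloc : StronglyFRegular p (Localization.Away c)) :
    StronglyFRegular p R ↔
      ∃ (e : ℕ) (ψ : R →+ R), 0 < e ∧
        (∀ r x : R, ψ (r ^ p ^ e * x) = r * ψ x) ∧ ψ c = 1 := by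
  refine ⟨fun h => h c hc, fun hsplit c' hc' => ?_⟩
  have hpowers : Submonoid.powers c ≤ nonZeroDivisors R :=
    Submonoid.powers_le.2 (mem_nonZeroDivisors_of_forall_notMem_minimalPrimes (hc := hc))
  obtain ⟨e, ψ, -, hψ, hψc'⟩ :=
    hloc _ (IsLocalization.algebraMap_notMem_minimalPrimes (Submonoid.powers c) hc')
  have hFrobe : (iterateFrobenius R p e).Finite := by
    rw [iterateFrobenius_eq_pow]; exact hFfinite.pow e
  obtain ⟨⟨_, N, rfl⟩, θ, hθ, hθψ⟩ := IsLocalization.exists_pow_semilinear_lift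
    (Submonoid.powers c) hpowers hFrobe (fun _ => iterateFrobenius_def ..) ψ hψ
  have hθc' : θ c' = c ^ N :=
    IsLocalization.injective _ hpowers (by rw [hθψ, hψc', Algebra.smul_def, mul_one])
  exact FSplitsAt.of_map hθ (hθc' ▸ FSplitsAt.pow (expChar_pos R p) hsplit N)

/-- **Hochster–Huneke, Theorem 5.9.** Let `R` be an `F`-finite reduced
Noetherian ring of characteristic `p > 0` and `c` an element not in any minimal prime such
that `R_c` is strongly `F`-regular.  Then `R` is strongly `F`-regular if and only if the map
`R → R^{1/q}`, `1 ↦ c^{1/q}`, splits for some `q = pᵉ`. -/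
theorem stronglyFRegular_iff_splitting_at_c
    (p : ℕ) (hp : p.Prime) (R : Type u) [CommRing R] [IsNoetherianRing R] [ExpChar R p]
    (hred : IsReduced R) (hFfinite : (frobenius R p).Finite)
    (c : R) (hc : ∀ P ∈ minimalPrimes R, c ∉ P)
    (hloc : StronglyFRegular p (Localization.Away c)) :
    StronglyFRegular p R ↔
      ∃ (e : ℕ) (ψ : R →+ R), 0 < e ∧
        (∀ r x : R, ψ (r ^ p ^ e * x) = r * ψ x) ∧ ψ c = 1 :=
  stronglyFRegular_iff_splitting_at_c_general p R hred hFfinite c hc hloc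
end
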